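/- Let R be an exchange ring in which 2 is invertible and a ∈ R with a - a³ regular. If aR/ar(a²) and R/(aR + r(a)) are projective right R-modules, then (a-a³)R ⊕ ar(a²) ≅ (a-a³)R ⊕ R/(aR + r(a)) as right R-modules. -/

import Mathlib

noncomputable section

namespace SepExchange

variable (R : Type) [Ring R]

/-- The right annihilator `r(a)` as a right `R`-submodule of `R`. -/
def rAnn (a : R) : Submodule Rᵐᵒᵖ R where
  carrier := {x | a * x = 0}
  add_mem' := by intro x y hx hy; simp_all [Set.mem_setOf_eq, mul_add]
  zero_mem' := by simp
  smul_mem' := by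
    intro c x hx
    simp only [Set.mem_setOf_eq, MulOpposite.smul_eq_mul_unop] at *
    rw [← mul_assoc, hx, zero_mul]

/-- The principal right ideal `aR` as a right `R`-submodule of `R`. -/
def rIdeal (a : R) : Submodule Rᵐᵒᵖ R := Submodule.span Rᵐᵒᵖ {a}

/-- The right `R`-module `a·r(a²) = {a*t : a²*t = 0}`. -/
def arAnn2 (a : R) : Submodule Rᵐᵒᵖ R where
  carrier := {x | ∃ t, x = a * t ∧ a ^ 2 * t = 0}
  add_mem' := by
    rintro x y ⟨t1, rfl, h1⟩ ⟨t2, rfl, h2⟩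
    exact ⟨t1 + t2, by rw [mul_add], by rw [mul_add, h1, h2, add_zero]⟩
  zero_mem' := ⟨0, by simp, by simp⟩
  smul_mem' := by
    rintro c x ⟨t, rfl, ht⟩
    refine ⟨t * c.unop, ?_, ?_⟩
    · simp only [MulOpposite.smul_eq_mul_unop, MulOpposite.unop_op, mul_assoc]
    · rw [← mul_assoc, ht, zero_mul]

/-- `R` is an exchange ring: for each `a` there is an idempotent `e ∈ aR`
with `1 - e ∈ (1-a)R`. -/
def ExchangeRing : Prop :=
  ∀ a : R, ∃ e : R, IsIdempotentElem e ∧ (∃ r, e = a * r) ∧ (∃ s, (1 : R) - e = (1 - a) * s)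

/-- `R` is separative: `A⊕A ≅ A⊕B ≅ B⊕B ⟹ A ≅ B` for finitely generated
projective right `R`-modules. -/
def Separative : Prop :=
  ∀ (A B : Type) [AddCommGroup A] [Module Rᵐᵒᵖ A] [AddCommGroup B] [Module Rᵐᵒᵖ B],
    Module.Finite Rᵐᵒᵖ A → Module.Projective Rᵐᵒᵖ A →
    Module.Finite Rᵐᵒᵖ B → Module.Projective Rᵐᵒᵖ B →
    Nonempty ((A × A) ≃ₗ[Rᵐᵒᵖ] (A × B)) → Nonempty ((A × B) ≃ₗ[Rᵐᵒᵖ] (B × B)) →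
    Nonempty (A ≃ₗ[Rᵐᵒᵖ] B)

/-- `a` is unit-regular. -/
def IsUnitRegular (a : R) : Prop := ∃ u : Rˣ, a = a * (u : R) * a

/-- `a` is special clean: there is an idempotent `e` with `a - e` a unit and
`aR ∩ eR = 0`. -/
def IsSpecialClean (a : R) : Prop :=
  ∃ e : R, IsIdempotentElem e ∧ IsUnit (a - e) ∧ rIdeal R a ⊓ rIdeal R e = ⊥

/-- `A ≲⊕ B`: `A` is isomorphic to a direct summand of `B` (right `R`-modules). -/
def SummandOf (A B : Type) [AddCommGroup A] [Module Rᵐᵒᵖ A]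
    [AddCommGroup B] [Module Rᵐᵒᵖ B] : Prop :=
  ∃ N N' : Submodule Rᵐᵒᵖ B, IsCompl N N' ∧ Nonempty (A ≃ₗ[Rᵐᵒᵖ] ↥N)

/-- `A ∝ B`: `A` is isomorphic to a direct summand of a finite direct sum of
copies of `B`. -/
def Propto (A B : Type) [AddCommGroup A] [Module Rᵐᵒᵖ A]
    [AddCommGroup B] [Module Rᵐᵒᵖ B] : Prop :=
  ∃ m : ℕ, 0 < m ∧ SummandOf R A (Fin m → B)

end SepExchange

/-!
Write `b = a - a³`. Since `b = bsb`, the right ideal `bR = (bs)R` is a direct summand of `R`.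
Left multiplication by `a` commutes with `b`, so it is an endomorphism of `bR`; its kernel is
`bR ∩ r(a) = aR ∩ r(a) = ar(a²)`, and `y ↦ sy` identifies its cokernel `bR / abR` with
`R / (aR + r(a))`, because `1 - sb` maps `R` into `aR + r(a)`. This gives an exact sequence
`0 → ar(a²) → bR → bR → R/(aR + r(a)) → 0` whose last two terms are projective, and splitting
it at the image `I` gives `bR ≅ I ⊕ R/(aR + r(a))` and `bR ≅ ar(a²) ⊕ I`.
-/

section SplitExact

variable {S K M N Q : Type*} [Ring S] [AddCommGroup K] [AddCommGroup M] [AddCommGroup N]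
  [AddCommGroup Q] [Module S K] [Module S M] [Module S N] [Module S Q]

theorem Function.Exact.nonempty_linearEquiv_prod_of_projective [Module.Projective S Q]
    {f : M →ₗ[S] N} {g : N →ₗ[S] Q} (h : Function.Exact f g) (hf : Function.Injective f)
    (hg : Function.Surjective g) : Nonempty (N ≃ₗ[S] M × Q) :=
  let ⟨l, hl⟩ := Module.projective_lifting_property g LinearMap.id hg
  ⟨(h.splitSurjectiveEquiv hf ⟨l, hl⟩).1⟩

/-- For an exact sequence `0 → K → M → N → Q → 0` with `N` and `Q` projective, the image `I` of
`M → N` is projective as a summand of `N ≅ I × Q`, so `M ≅ K × I` as well. -/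
theorem Function.Exact.nonempty_prod_linearEquiv_prod [Module.Projective S N]
    [Module.Projective S Q] {i : K →ₗ[S] M} {f : M →ₗ[S] N} {p : N →ₗ[S] Q}
    (hif : Function.Exact i f) (hfp : Function.Exact f p) (hi : Function.Injective i)
    (hp : Function.Surjective p) : Nonempty ((N × K) ≃ₗ[S] (M × Q)) := by
  have hIp : Function.Exact (LinearMap.range f).subtype p := by
    rw [LinearMap.exact_iff, Submodule.range_subtype]
    exact LinearMap.exact_iff.1 hfp
  obtain ⟨eN⟩ := hIp.nonempty_linearEquiv_prod_of_projective (Submodule.injective_subtype _) hp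
  have : Module.Projective S (LinearMap.range f) :=
    .of_split (eN.symm.toLinearMap ∘ₗ LinearMap.inl _ _ _) (LinearMap.fst _ _ _ ∘ₗ eN.toLinearMap)
      (by ext; simp)
  have hiI : Function.Exact i f.rangeRestrict := by
    rw [LinearMap.exact_iff, LinearMap.ker_rangeRestrict]
    exact LinearMap.exact_iff.1 hif
  obtain ⟨eM⟩ := hiI.nonempty_linearEquiv_prod_of_projective hi f.surjective_rangeRestrict
  exact ⟨(LinearEquiv.prodComm S N K ≪≫ₗ (LinearEquiv.refl S K).prodCongr eN ≪≫ₗ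
    (LinearEquiv.prodAssoc S K _ Q).symm ≪≫ₗ eM.symm.prodCongr (LinearEquiv.refl S Q))⟩

end SplitExact

namespace SepExchange

variable {R : Type} [Ring R]

theorem mem_rIdeal_iff {c x : R} : x ∈ rIdeal R c ↔ ∃ t, x = c * t := by
  simp only [rIdeal, Submodule.mem_span_singleton, MulOpposite.smul_eq_mul_unop]
  exact ⟨fun ⟨m, hm⟩ ↦ ⟨m.unop, hm.symm⟩, fun ⟨t, ht⟩ ↦ ⟨MulOpposite.op t, ht.symm⟩⟩

theorem mul_mem_rIdeal (c t : R) : c * t ∈ rIdeal R c := mem_rIdeal_iff.2 ⟨t, rfl⟩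

theorem mem_arAnn2_iff {a x : R} : x ∈ arAnn2 R a ↔ x ∈ rIdeal R a ∧ a * x = 0 := by
  rw [mem_rIdeal_iff]
  constructor
  · rintro ⟨t, rfl, ht⟩
    exact ⟨⟨t, rfl⟩, by rw [← mul_assoc, ← sq, ht]⟩
  · rintro ⟨⟨t, rfl⟩, ht⟩
    exact ⟨t, rfl, by rw [sq, mul_assoc, ht]⟩

theorem projective_rIdeal_of_eq_mul_mul {b s : R} (h : b = b * s * b) :
    Module.Projective Rᵐᵒᵖ (rIdeal R b) := by
  have : Module.Projective Rᵐᵒᵖ R := .of_equiv (MulOpposite.opLinearEquiv Rᵐᵒᵖ).symm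
  refine .of_split (rIdeal R b).subtype
    ((LinearMap.mulLeft Rᵐᵒᵖ (b * s)).codRestrict _ fun x ↦ by
      rw [LinearMap.mulLeft_apply, mul_assoc]; exact mul_mem_rIdeal _ _) ?_
  ext ⟨x, hx⟩
  obtain ⟨t, rfl⟩ := mem_rIdeal_iff.1 hx
  simp [← mul_assoc, ← h]

theorem commute_sub_pow_three (a : R) : Commute a (a - a ^ 3) :=
  (Commute.refl a).sub_right ((Commute.refl a).pow_right 3)

theorem sub_pow_three_mul_eq_zero {a z : R} (hz : a * z = 0) : (a - a ^ 3) * z = 0 := by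
  have : (a - a ^ 3) * z = (1 - a ^ 2) * (a * z) := by noncomm_ring
  rw [this, hz, mul_zero]

theorem rIdeal_sub_pow_three_le (a : R) : rIdeal R (a - a ^ 3) ≤ rIdeal R a := by
  intro x hx
  obtain ⟨t, rfl⟩ := mem_rIdeal_iff.1 hx
  exact mem_rIdeal_iff.2 ⟨(1 - a ^ 2) * t, by noncomm_ring⟩

theorem arAnn2_le_rIdeal_sub_pow_three (a : R) : arAnn2 R a ≤ rIdeal R (a - a ^ 3) := by
  rintro _ ⟨t, rfl, ht⟩
  refine mem_rIdeal_iff.2 ⟨t, ?_⟩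
  rw [sub_mul, pow_succ', mul_assoc, ht, mul_zero, sub_zero]

def mulLeftRIdeal (a : R) : rIdeal R (a - a ^ 3) →ₗ[Rᵐᵒᵖ] rIdeal R (a - a ^ 3) :=
  (LinearMap.mulLeft Rᵐᵒᵖ a).restrict fun x hx ↦ by
    obtain ⟨t, rfl⟩ := mem_rIdeal_iff.1 hx
    rw [LinearMap.mulLeft_apply, ← mul_assoc, (commute_sub_pow_three a).eq, mul_assoc]
    exact mul_mem_rIdeal _ _

@[simp] theorem coe_mulLeftRIdeal (a : R) (y : rIdeal R (a - a ^ 3)) :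
    (mulLeftRIdeal a y : R) = a * y := rfl

def quotMulLeft (a s : R) : rIdeal R (a - a ^ 3) →ₗ[Rᵐᵒᵖ] R ⧸ (rIdeal R a ⊔ rAnn R a) :=
  (rIdeal R a ⊔ rAnn R a).mkQ ∘ₗ LinearMap.mulLeft Rᵐᵒᵖ s ∘ₗ (rIdeal R (a - a ^ 3)).subtype

theorem exact_inclusion_mulLeftRIdeal (a : R) :
    Function.Exact (Submodule.inclusion (arAnn2_le_rIdeal_sub_pow_three a)) (mulLeftRIdeal a) := by
  rw [LinearMap.exact_iff, Submodule.range_inclusion]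
  ext y
  simp [mem_arAnn2_iff, rIdeal_sub_pow_three_le a y.2, Subtype.ext_iff]

variable {a s : R} (h : a - a ^ 3 = (a - a ^ 3) * s * (a - a ^ 3))
include h

/-- `x - s(a - a³)x` is killed by `a - a³`, and every such `w` splits as
`(1 - a²)w + a(aw) ∈ r(a) + aR`. -/
theorem sub_mul_mem_sup (x : R) : x - s * ((a - a ^ 3) * x) ∈ rIdeal R a ⊔ rAnn R a := by
  set w := x - s * ((a - a ^ 3) * x)
  have hw : (a - a ^ 3) * w = 0 := by
    rw [mul_sub, ← mul_assoc, ← mul_assoc, ← h, sub_self]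
  have hsplit : w = a * (a * w) + (1 - a ^ 2) * w := by noncomm_ring
  rw [hsplit]
  refine Submodule.add_mem_sup (mul_mem_rIdeal _ _) ?_
  change a * ((1 - a ^ 2) * w) = 0
  rw [← hw]; noncomm_ring

theorem quotMulLeft_surjective : Function.Surjective (quotMulLeft a s) := by
  intro q
  obtain ⟨x, rfl⟩ := Submodule.mkQ_surjective _ q
  refine ⟨⟨_, mul_mem_rIdeal (a - a ^ 3) x⟩, ?_⟩
  simp only [quotMulLeft, LinearMap.comp_apply, Submodule.mkQ_apply, Submodule.Quotient.eq]
  rw [← neg_mem_iff, neg_sub]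
  exact sub_mul_mem_sup h x

theorem exact_mulLeftRIdeal_quotMulLeft :
    Function.Exact (mulLeftRIdeal a) (quotMulLeft a s) := by
  rintro ⟨y, hyb⟩
  simp only [quotMulLeft, LinearMap.comp_apply, Submodule.mkQ_apply, Submodule.subtype_apply,
    LinearMap.mulLeft_apply, Submodule.Quotient.mk_eq_zero, Set.mem_range, Subtype.ext_iff,
    coe_mulLeftRIdeal, Subtype.exists]
  constructor
  · intro hy
    obtain ⟨u, hu, z, hz, huz⟩ := Submodule.mem_sup.1 hy
    obtain ⟨w, rfl⟩ := mem_rIdeal_iff.1 hu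
    obtain ⟨t, ht⟩ := mem_rIdeal_iff.1 hyb
    refine ⟨_, mul_mem_rIdeal (a - a ^ 3) w, ?_⟩
    calc a * ((a - a ^ 3) * w) = (a - a ^ 3) * (a * w + z) := by
          rw [mul_add, sub_pow_three_mul_eq_zero hz, add_zero, ← mul_assoc,
            (commute_sub_pow_three a).eq, mul_assoc]
      _ = (a - a ^ 3) * (s * y) := by rw [huz]
      _ = y := by rw [ht, ← mul_assoc, ← mul_assoc, ← h]
  · rintro ⟨_, hy, rfl⟩
    obtain ⟨t, rfl⟩ := mem_rIdeal_iff.1 hy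
    have : s * (a * ((a - a ^ 3) * t)) = a * t - (a * t - s * ((a - a ^ 3) * (a * t))) := by
      rw [← mul_assoc a, (commute_sub_pow_three a).eq, mul_assoc, sub_sub_cancel]
    rw [this]
    exact sub_mem (Submodule.mem_sup_left (mul_mem_rIdeal _ _)) (sub_mul_mem_sup h _)

end SepExchange

open SepExchange in
theorem stmt14_general (R : Type) [Ring R]
    (a s : R) (h : a - a ^ 3 = (a - a ^ 3) * s * (a - a ^ 3))
    (h2 : Module.Projective Rᵐᵒᵖ (R ⧸ (rIdeal R a ⊔ rAnn R a))) :
    Nonempty ((↥(rIdeal R (a - a ^ 3)) × ↥(arAnn2 R a)) ≃ₗ[Rᵐᵒᵖ]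
      (↥(rIdeal R (a - a ^ 3)) × (R ⧸ (rIdeal R a ⊔ rAnn R a)))) := by
  have := projective_rIdeal_of_eq_mul_mul h
  exact (exact_inclusion_mulLeftRIdeal a).nonempty_prod_linearEquiv_prod
    (exact_mulLeftRIdeal_quotMulLeft h) (Submodule.inclusion_injective _)
    (quotMulLeft_surjective h)

open SepExchange in
/-- Lemma 3.3: in an exchange ring with `2` invertible, if `a - a³` is regular
and `aR/ar(a²)`, `R/(aR + r(a))` are projective, then
`(a-a³)R ⊕ ar(a²) ≅ (a-a³)R ⊕ R/(aR + r(a))`. -/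
theorem stmt14 (R : Type) [Ring R] [Invertible (2 : R)] (hex : ExchangeRing R)
    (a s : R) (h : a - a ^ 3 = (a - a ^ 3) * s * (a - a ^ 3))
    (h1 : Module.Projective Rᵐᵒᵖ
      (↥(rIdeal R a) ⧸ (arAnn2 R a).comap (rIdeal R a).subtype))
    (h2 : Module.Projective Rᵐᵒᵖ (R ⧸ (rIdeal R a ⊔ rAnn R a))) :
    Nonempty ((↥(rIdeal R (a - a ^ 3)) × ↥(arAnn2 R a)) ≃ₗ[Rᵐᵒᵖ]
      (↥(rIdeal R (a - a ^ 3)) × (R ⧸ (rIdeal R a ⊔ rAnn R a)))) :=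
  stmt14_general R a s h h2
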